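/- The inner translations K6 and K7 are equivalent in minimal logic: ML ⊢ A^{K6} ↔ A^{K7} for every formula A, where K6 translates (A→B) to (A^{K6} → ¬¬B^{K6}) and K7 translates (A→B) to (¬B^{K7} → ¬A^{K7}), both acting as the Kuroda inner translation on the other connectives and quantifiers. -/

import Mathlib

/-!
Induct on `A`. Away from implications the two translations agree clause by clause, so these
cases follow from the congruence rules of minimal logic. At an implication, `A → ¬¬B` is
`A → (¬B → ⊥)` and `¬B → ¬A` is `¬B → (A → ⊥)`: the two clauses differ only by exchanging
the premises, which is provable in minimal logic.
-/

/-- First-order formulas over domain `α`, with HOAS quantifiers.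
`bot` is an ordinary atom with no special rules in minimal logic. -/
inductive Formula (α : Type) : Type where
  | atom : ℕ → List α → Formula α
  | bot : Formula α
  | and : Formula α → Formula α → Formula α
  | or : Formula α → Formula α → Formula α
  | imp : Formula α → Formula α → Formula α
  | all : (α → Formula α) → Formula α
  | ex : (α → Formula α) → Formula α

/-- Negation: `¬A ≡ A → ⊥`. -/
def Formula.neg {α : Type} (A : Formula α) : Formula α := A.imp .bot

/-- Biconditional. -/
def Formula.iff {α : Type} (A B : Formula α) : Formula α := (A.imp B).and (B.imp A)

/-- Minimal first-order logic: natural deduction without ex falso quodlibet. -/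
inductive ML {α : Type} : Set (Formula α) → Formula α → Prop where
  | ax {Γ : Set (Formula α)} {A : Formula α} : A ∈ Γ → ML Γ A
  | impI {Γ : Set (Formula α)} {A B : Formula α} : ML (insert A Γ) B → ML Γ (A.imp B)
  | impE {Γ : Set (Formula α)} {A B : Formula α} : ML Γ (A.imp B) → ML Γ A → ML Γ B
  | andI {Γ : Set (Formula α)} {A B : Formula α} : ML Γ A → ML Γ B → ML Γ (A.and B)
  | andE1 {Γ : Set (Formula α)} {A B : Formula α} : ML Γ (A.and B) → ML Γ A
  | andE2 {Γ : Set (Formula α)} {A B : Formula α} : ML Γ (A.and B) → ML Γ B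
  | orI1 {Γ : Set (Formula α)} {A B : Formula α} : ML Γ A → ML Γ (A.or B)
  | orI2 {Γ : Set (Formula α)} {A B : Formula α} : ML Γ B → ML Γ (A.or B)
  | orE {Γ : Set (Formula α)} {A B C : Formula α} : ML Γ (A.or B) → ML (insert A Γ) C → ML (insert B Γ) C → ML Γ C
  | allI {Γ : Set (Formula α)} {f : α → Formula α} : (∀ a, ML Γ (f a)) → ML Γ (.all f)
  | allE {Γ f} (a : α) : ML Γ (.all f) → ML Γ (f a)
  | exI {Γ f} (a : α) : ML Γ (f a) → ML Γ (.ex f)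
  | exE {Γ : Set (Formula α)} {f : α → Formula α} {C : Formula α} : ML Γ (.ex f) → (∀ a, ML (insert (f a) Γ) C) → ML Γ C

/-- Intuitionistic first-order logic: minimal logic plus ex falso quodlibet. -/
inductive IL {α : Type} : Set (Formula α) → Formula α → Prop where
  | ax {Γ : Set (Formula α)} {A : Formula α} : A ∈ Γ → IL Γ A
  | impI {Γ : Set (Formula α)} {A B : Formula α} : IL (insert A Γ) B → IL Γ (A.imp B)
  | impE {Γ : Set (Formula α)} {A B : Formula α} : IL Γ (A.imp B) → IL Γ A → IL Γ B
  | andI {Γ : Set (Formula α)} {A B : Formula α} : IL Γ A → IL Γ B → IL Γ (A.and B)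
  | andE1 {Γ : Set (Formula α)} {A B : Formula α} : IL Γ (A.and B) → IL Γ A
  | andE2 {Γ : Set (Formula α)} {A B : Formula α} : IL Γ (A.and B) → IL Γ B
  | orI1 {Γ : Set (Formula α)} {A B : Formula α} : IL Γ A → IL Γ (A.or B)
  | orI2 {Γ : Set (Formula α)} {A B : Formula α} : IL Γ B → IL Γ (A.or B)
  | orE {Γ : Set (Formula α)} {A B C : Formula α} : IL Γ (A.or B) → IL (insert A Γ) C → IL (insert B Γ) C → IL Γ C
  | allI {Γ : Set (Formula α)} {f : α → Formula α} : (∀ a, IL Γ (f a)) → IL Γ (.all f)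
  | allE {Γ f} (a : α) : IL Γ (.all f) → IL Γ (f a)
  | exI {Γ f} (a : α) : IL Γ (f a) → IL Γ (.ex f)
  | exE {Γ : Set (Formula α)} {f : α → Formula α} {C : Formula α} : IL Γ (.ex f) → (∀ a, IL (insert (f a) Γ) C) → IL Γ C
  | efq {Γ : Set (Formula α)} {A : Formula α} : IL Γ .bot → IL Γ A

/-- Classical first-order logic: minimal logic plus double negation elimination. -/
inductive CL {α : Type} : Set (Formula α) → Formula α → Prop where
  | ax {Γ : Set (Formula α)} {A : Formula α} : A ∈ Γ → CL Γ A
  | impI {Γ : Set (Formula α)} {A B : Formula α} : CL (insert A Γ) B → CL Γ (A.imp B)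
  | impE {Γ : Set (Formula α)} {A B : Formula α} : CL Γ (A.imp B) → CL Γ A → CL Γ B
  | andI {Γ : Set (Formula α)} {A B : Formula α} : CL Γ A → CL Γ B → CL Γ (A.and B)
  | andE1 {Γ : Set (Formula α)} {A B : Formula α} : CL Γ (A.and B) → CL Γ A
  | andE2 {Γ : Set (Formula α)} {A B : Formula α} : CL Γ (A.and B) → CL Γ B
  | orI1 {Γ : Set (Formula α)} {A B : Formula α} : CL Γ A → CL Γ (A.or B)
  | orI2 {Γ : Set (Formula α)} {A B : Formula α} : CL Γ B → CL Γ (A.or B)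
  | orE {Γ : Set (Formula α)} {A B C : Formula α} : CL Γ (A.or B) → CL (insert A Γ) C → CL (insert B Γ) C → CL Γ C
  | allI {Γ : Set (Formula α)} {f : α → Formula α} : (∀ a, CL Γ (f a)) → CL Γ (.all f)
  | allE {Γ f} (a : α) : CL Γ (.all f) → CL Γ (f a)
  | exI {Γ f} (a : α) : CL Γ (f a) → CL Γ (.ex f)
  | exE {Γ : Set (Formula α)} {f : α → Formula α} {C : Formula α} : CL Γ (.ex f) → (∀ a, CL (insert (f a) Γ) C) → CL Γ C
  | dne {Γ : Set (Formula α)} {A : Formula α} : CL Γ A.neg.neg → CL Γ A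

/-- Inner translation of K6: `(A → B)` goes to `A^{K6} → ¬¬B^{K6}`, otherwise as Kuroda. -/
def kurodaSix {α : Type} : Formula α → Formula α
  | .atom n ts => Formula.atom n ts
  | .bot => Formula.bot
  | .and A B => (kurodaSix A).and (kurodaSix B)
  | .or A B => (kurodaSix A).or (kurodaSix B)
  | .imp A B => (kurodaSix A).imp (kurodaSix B).neg.neg
  | .all f => .all (fun a => (kurodaSix (f a)).neg.neg)
  | .ex f => .ex (fun a => kurodaSix (f a))

/-- Inner translation of K7: `(A → B)` goes to `¬B^{K7} → ¬A^{K7}`, otherwise as Kuroda. -/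
def kurodaSeven {α : Type} : Formula α → Formula α
  | .atom n ts => Formula.atom n ts
  | .bot => Formula.bot
  | .and A B => (kurodaSeven A).and (kurodaSeven B)
  | .or A B => (kurodaSeven A).or (kurodaSeven B)
  | .imp A B => (kurodaSeven B).neg.imp (kurodaSeven A).neg
  | .all f => .all (fun a => (kurodaSeven (f a)).neg.neg)
  | .ex f => .ex (fun a => kurodaSeven (f a))

namespace ML

variable {α : Type} {Γ Δ : Set (Formula α)} {A A' B B' C : Formula α} {f g : α → Formula α}

theorem weaken (h : ML Γ A) (hΓ : Γ ⊆ Δ) : ML Δ A := by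
  induction h generalizing Δ with
  | ax h => exact .ax (hΓ h)
  | impI _ ih => exact .impI (ih (Set.insert_subset_insert hΓ))
  | impE _ _ ih₁ ih₂ => exact .impE (ih₁ hΓ) (ih₂ hΓ)
  | andI _ _ ih₁ ih₂ => exact .andI (ih₁ hΓ) (ih₂ hΓ)
  | andE1 _ ih => exact .andE1 (ih hΓ)
  | andE2 _ ih => exact .andE2 (ih hΓ)
  | orI1 _ ih => exact .orI1 (ih hΓ)
  | orI2 _ ih => exact .orI2 (ih hΓ)
  | orE _ _ _ ih ih₁ ih₂ =>
      exact .orE (ih hΓ) (ih₁ (Set.insert_subset_insert hΓ)) (ih₂ (Set.insert_subset_insert hΓ))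
  | allI _ ih => exact .allI fun a => ih a hΓ
  | allE a _ ih => exact .allE a (ih hΓ)
  | exI a _ ih => exact .exI a (ih hΓ)
  | exE _ _ ih ihs => exact .exE (ih hΓ) fun a => ihs a (Set.insert_subset_insert hΓ)

theorem weaken_insert (h : ML Γ A) : ML (insert B Γ) A :=
  h.weaken (Set.subset_insert _ _)

theorem hyp : ML (insert A Γ) A :=
  .ax (Set.mem_insert _ _)

theorem iff_intro (h₁ : ML Γ (A.imp B)) (h₂ : ML Γ (B.imp A)) : ML Γ (A.iff B) :=
  .andI h₁ h₂

theorem iff_mp (h : ML Γ (A.iff B)) : ML Γ (A.imp B) :=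
  .andE1 h

theorem iff_mpr (h : ML Γ (A.iff B)) : ML Γ (B.imp A) :=
  .andE2 h

theorem iff_refl : ML Γ (A.iff A) :=
  iff_intro (.impI hyp) (.impI hyp)

theorem imp_trans (h₁ : ML Γ (A.imp B)) (h₂ : ML Γ (B.imp C)) : ML Γ (A.imp C) :=
  .impI (.impE h₂.weaken_insert (.impE h₁.weaken_insert hyp))

theorem iff_trans (h₁ : ML Γ (A.iff B)) (h₂ : ML Γ (B.iff C)) : ML Γ (A.iff C) :=
  iff_intro (imp_trans (iff_mp h₁) (iff_mp h₂)) (imp_trans (iff_mpr h₂) (iff_mpr h₁))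

theorem imp_comm : ML Γ ((A.imp (B.imp C)).imp (B.imp (A.imp C))) :=
  .impI (.impI (.impI (.impE (.impE hyp.weaken_insert.weaken_insert hyp) hyp.weaken_insert)))

theorem imp_neg_neg_iff_neg_imp_neg : ML Γ ((A.imp B.neg.neg).iff (B.neg.imp A.neg)) :=
  iff_intro imp_comm imp_comm

theorem imp_imp_imp (hA : ML Γ (A'.imp A)) (hB : ML Γ (B.imp B')) :
    ML Γ ((A.imp B).imp (A'.imp B')) :=
  .impI (.impI (.impE hB.weaken_insert.weaken_insert
    (.impE hyp.weaken_insert (.impE hA.weaken_insert.weaken_insert hyp))))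

theorem imp_congr (hA : ML Γ (A.iff A')) (hB : ML Γ (B.iff B')) :
    ML Γ ((A.imp B).iff (A'.imp B')) :=
  iff_intro (imp_imp_imp (iff_mpr hA) (iff_mp hB)) (imp_imp_imp (iff_mp hA) (iff_mpr hB))

theorem neg_congr (h : ML Γ (A.iff A')) : ML Γ (A.neg.iff A'.neg) :=
  imp_congr h iff_refl

theorem and_imp_and (hA : ML Γ (A.imp A')) (hB : ML Γ (B.imp B')) :
    ML Γ ((A.and B).imp (A'.and B')) :=
  .impI (.andI (.impE hA.weaken_insert (.andE1 hyp)) (.impE hB.weaken_insert (.andE2 hyp)))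

theorem and_congr (hA : ML Γ (A.iff A')) (hB : ML Γ (B.iff B')) :
    ML Γ ((A.and B).iff (A'.and B')) :=
  iff_intro (and_imp_and (iff_mp hA) (iff_mp hB)) (and_imp_and (iff_mpr hA) (iff_mpr hB))

theorem or_imp_or (hA : ML Γ (A.imp A')) (hB : ML Γ (B.imp B')) :
    ML Γ ((A.or B).imp (A'.or B')) :=
  .impI (.orE hyp (.orI1 (.impE hA.weaken_insert.weaken_insert hyp))
    (.orI2 (.impE hB.weaken_insert.weaken_insert hyp)))

theorem or_congr (hA : ML Γ (A.iff A')) (hB : ML Γ (B.iff B')) :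
    ML Γ ((A.or B).iff (A'.or B')) :=
  iff_intro (or_imp_or (iff_mp hA) (iff_mp hB)) (or_imp_or (iff_mpr hA) (iff_mpr hB))

theorem all_imp_all (h : ∀ a, ML Γ ((f a).imp (g a))) : ML Γ ((Formula.all f).imp (.all g)) :=
  .impI (.allI fun a => .impE (h a).weaken_insert (.allE a hyp))

theorem all_congr (h : ∀ a, ML Γ ((f a).iff (g a))) : ML Γ ((Formula.all f).iff (.all g)) :=
  iff_intro (all_imp_all fun a => iff_mp (h a)) (all_imp_all fun a => iff_mpr (h a))

theorem ex_imp_ex (h : ∀ a, ML Γ ((f a).imp (g a))) : ML Γ ((Formula.ex f).imp (.ex g)) :=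
  .impI (.exE hyp fun a => .exI a (.impE (h a).weaken_insert.weaken_insert hyp))

theorem ex_congr (h : ∀ a, ML Γ ((f a).iff (g a))) : ML Γ ((Formula.ex f).iff (.ex g)) :=
  iff_intro (ex_imp_ex fun a => iff_mp (h a)) (ex_imp_ex fun a => iff_mpr (h a))

end ML

/-- `ML ⊢ A^{K6} ↔ A^{K7}` for every formula `A`. -/
theorem kurodaSix_iff_kurodaSeven {α : Type} (A : Formula α) :
    ML (∅ : Set (Formula α)) ((kurodaSix A).iff (kurodaSeven A)) := by
  induction A with
  | atom | bot => exact ML.iff_refl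
  | and A B ihA ihB => exact ML.and_congr ihA ihB
  | or A B ihA ihB => exact ML.or_congr ihA ihB
  | imp A B ihA ihB =>
      exact ML.iff_trans (ML.imp_congr ihA (ML.neg_congr (ML.neg_congr ihB)))
        ML.imp_neg_neg_iff_neg_imp_neg
  | all f ih => exact ML.all_congr fun a => ML.neg_congr (ML.neg_congr (ih a))
  | ex f ih => exact ML.ex_congr ih
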